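/- arXiv:2407.21180 — 4 statements merged into one kernel-verified Lean document; each statement's English description precedes it below -/
import Mathlib

section
/- In S_3, up to simultaneous conjugation, every ordered 4-tuple of transpositions whose product is the identity and which generates S_3 is conjugate to one of exactly four tuples: ((12),(12),(23),(23)), ((12),(23),(12),(13)), ((12),(23),(23),(12)), ((12),(13),(23),(13)). -/
set_option maxRecDepth 10000

instance : DecidablePred (Equiv.Perm.IsSwap (α := Fin 3)) := fun f =>
  decidable_of_iff (∃ x y, x ≠ y ∧ f = Equiv.swap x y) Iff.rfl

lemma swap_cases_S3 : ∀ σ : Equiv.Perm (Fin 3), σ.IsSwap →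
    σ = Equiv.swap 0 1 ∨ σ = Equiv.swap 1 2 ∨ σ = Equiv.swap 0 2 := by decide

lemma const_not_gen_S3 (τ : Fin 4 → Equiv.Perm (Fin 3)) (hswap : ∀ i, (τ i).IsSwap)
    (hconst : ∀ i j : Fin 4, τ i = τ j) : Subgroup.closure (Set.range τ) ≠ ⊤ := by
  intro htop
  have hord : orderOf (τ 0) = 2 := by
    refine orderOf_eq_prime ?_ ?_
    · obtain ⟨x, y, hxy, h⟩ := hswap 0
      rw [h, sq, Equiv.swap_mul_self]
    · obtain ⟨x, y, hxy, h⟩ := hswap 0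
      rw [h]
      simp [Equiv.swap_eq_one_iff, hxy]
  have hle : Subgroup.closure (Set.range τ) ≤ Subgroup.zpowers (τ 0) := by
    rw [Subgroup.closure_le]
    rintro _ ⟨i, rfl⟩
    rw [hconst i 0]
    exact Subgroup.mem_zpowers _
  rw [htop] at hle
  have : Subgroup.zpowers (τ 0) = ⊤ := top_le_iff.mp hle
  have hc : Nat.card (Subgroup.zpowers (τ 0)) = Nat.card (Equiv.Perm (Fin 3)) := by
    rw [this]; exact Nat.card_congr Subgroup.topEquiv.toEquiv
  rw [Nat.card_zpowers, hord] at hc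
  simp [Nat.card_eq_fintype_card, Fintype.card_perm, Nat.factorial] at hc

lemma key_S3 (t0 t1 t2 t3 : Equiv.Perm (Fin 3)) (h0 : t0.IsSwap) (h1 : t1.IsSwap)
    (h2 : t2.IsSwap) (h3 : t3.IsSwap) (hprod : t0 * t1 * t2 * t3 = 1)
    (hnc : ¬(t0 = t1 ∧ t1 = t2 ∧ t2 = t3)) :
    ∃ g : Equiv.Perm (Fin 3), ∃ k : Fin 4,
      (fun i => g * ![t0, t1, t2, t3] i * g⁻¹) =
        ![![Equiv.swap 0 1, Equiv.swap 0 1, Equiv.swap 1 2, Equiv.swap 1 2],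
          ![Equiv.swap 0 1, Equiv.swap 1 2, Equiv.swap 0 1, Equiv.swap 0 2],
          ![Equiv.swap 0 1, Equiv.swap 1 2, Equiv.swap 1 2, Equiv.swap 0 1],
          ![Equiv.swap 0 1, Equiv.swap 0 2, Equiv.swap 1 2, Equiv.swap 0 2]] k := by
  rcases swap_cases_S3 t0 h0 with rfl | rfl | rfl <;>
  rcases swap_cases_S3 t1 h1 with rfl | rfl | rfl <;>
  rcases swap_cases_S3 t2 h2 with rfl | rfl | rfl <;>
  rcases swap_cases_S3 t3 h3 with rfl | rfl | rfl <;>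
  revert hprod hnc <;> decide

/-- Up to simultaneous conjugation, every 4-tuple of transpositions of `S₃` with
product the identity and generating `S₃` is conjugate to exactly one of four tuples. -/
theorem classification_of_transposition_four_tuples_S3 :
    ∀ a b c : Equiv.Perm (Fin 3),
      a = Equiv.swap 0 1 → b = Equiv.swap 1 2 → c = Equiv.swap 0 2 →
    ∀ T : Fin 4 → (Fin 4 → Equiv.Perm (Fin 3)),
      T = ![![a, a, b, b], ![a, b, a, c], ![a, b, b, a], ![a, c, b, c]] →
    (∀ τ : Fin 4 → Equiv.Perm (Fin 3), (∀ i, (τ i).IsSwap) →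
        τ 0 * τ 1 * τ 2 * τ 3 = 1 → Subgroup.closure (Set.range τ) = ⊤ →
        ∃ g : Equiv.Perm (Fin 3), ∃ k : Fin 4, (fun i => g * τ i * g⁻¹) = T k) ∧
    (∀ k l : Fin 4,
        (∃ g : Equiv.Perm (Fin 3), (fun i => g * T k i * g⁻¹) = T l) → k = l) := by
  intro a b c ha hb hc T hT
  subst ha hb hc hT
  constructor
  · intro τ hswap hprod hgen
    have hnc : ¬(τ 0 = τ 1 ∧ τ 1 = τ 2 ∧ τ 2 = τ 3) := by
      rintro ⟨e1, e2, e3⟩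
      refine const_not_gen_S3 τ hswap ?_ hgen
      intro i j
      fin_cases i <;> fin_cases j <;> simp_all
    have hτ : τ = ![τ 0, τ 1, τ 2, τ 3] := by
      funext i; fin_cases i <;> rfl
    rw [hτ]
    exact key_S3 _ _ _ _ (hswap 0) (hswap 1) (hswap 2) (hswap 3) hprod hnc
  · decide
end

section
/- Let τ_1, ..., τ_{n-1} be transpositions in S_n, and form the graph on vertex set {1,...,n} with an edge {a,b} for each transposition (ab) among them. Then the product τ_1 τ_2 ⋯ τ_{n-1} is an n-cycle if and only if this graph is a tree. -/
/-!
Right-multiplying a permutation `π` by a transposition `(a b)` changes `π` only at `a` and `b`;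
when `a` and `b` lie in different cycles of `π`, the orbit of `a` under `π * (a b)` runs through
the whole `π`-orbit of `b` back to `b`, so the two cycles merge. Hence the cycles of `τ₁ ⋯ τₖ`
always lie inside the connected components of the graph of the `τᵢ`, and equal them when every
`τᵢ` joins two components of the graph of `τ₁, …, τᵢ₋₁`, i.e. when the `τᵢ` are distinct and their
graph is a forest. With `n - 1` transpositions on `n` points, the graph is a tree exactly when it
is connected, which gives both directions.
-/

open Equiv SimpleGraph

theorem Equiv.swap_eq_swap_iff {α : Type*} [DecidableEq α] {a b c d : α} (hab : a ≠ b) :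
    swap a b = swap c d ↔ s(a, b) = s(c, d) := by
  refine ⟨fun h => ?_, fun h => ?_⟩
  · have hb : swap c d a = b := by rw [← h, swap_apply_left]
    rw [swap_apply_def] at hb
    split_ifs at hb with hac had
    · rw [hac, hb]
    · rw [had, hb, Sym2.eq_swap]
    · exact absurd hb hab
  · rcases Sym2.eq_iff.1 h with ⟨rfl, rfl⟩ | ⟨rfl, rfl⟩
    · rfl
    · exact swap_comm _ _

namespace Equiv.Perm

variable {α : Type*}

theorem SameCycle.rel_of_forall_apply {f : Perm α} {r : α → α → Prop} (hr : Equivalence r)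
    (h : ∀ x, r x (f x)) {x y : α} (hxy : f.SameCycle x y) : r x y := by
  obtain ⟨i, rfl⟩ := hxy
  induction i using Int.induction_on generalizing x with
  | zero => exact hr.refl x
  | succ i ih => rw [zpow_add_one, mul_apply]; exact hr.trans (h x) ih
  | pred i ih =>
    rw [zpow_sub_one, mul_apply]
    exact hr.trans (hr.symm (by simpa using h (f⁻¹ x))) ih

theorem isCycle_and_support_eq_univ_iff [Fintype α] [DecidableEq α] [Nontrivial α]
    {σ : Perm α} : σ.IsCycle ∧ σ.support = Finset.univ ↔ ∀ x y, σ.SameCycle x y := by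
  refine ⟨fun ⟨hσ, hsupp⟩ x y => ?_, fun h => ?_⟩
  · have hmove : ∀ z, σ z ≠ z := fun z => mem_support.1 (hsupp ▸ Finset.mem_univ z)
    exact hσ.sameCycle (hmove x) (hmove y)
  · have hmove : ∀ x, σ x ≠ x := fun x hx =>
      (exists_ne x).elim fun y hy => hy ((h x y).eq_of_left hx).symm
    obtain ⟨x⟩ := ‹Nontrivial α›.to_nonempty
    exact ⟨⟨x, hmove x, fun y _ => h x y⟩,
      Finset.eq_univ_of_forall fun z => mem_support.2 (hmove z)⟩

variable [DecidableEq α] [Finite α] {π : Perm α} {a b : α}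

theorem sameCycle_mul_swap_of_not_sameCycle (hab : ¬π.SameCycle a b) :
    (π * swap a b).SameCycle a b := by
  by_contra hσ
  have orbit : ∀ k : ℕ, (π * swap a b).SameCycle a ((π ^ (k + 1)) b) := by
    intro k
    induction k with
    | zero => simpa using (SameCycle.refl (π * swap a b) a).apply_right
    | succ k ih =>
      have hya : (π ^ (k + 1)) b ≠ a := fun h =>
        hab (h ▸ sameCycle_pow_right.2 (SameCycle.refl π b)).symm
      have hyb : (π ^ (k + 1)) b ≠ b := fun h => hσ (by rwa [h] at ih)
      rw [pow_succ', mul_apply, ← swap_apply_of_ne_of_ne hya hyb, ← mul_apply]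
      exact ih.apply_right
  obtain ⟨k, hk⟩ := Nat.exists_eq_add_one_of_ne_zero (orderOf_pos π).ne'
  exact hσ (by simpa [← hk, pow_orderOf_eq_one] using orbit k)

theorem SameCycle.mul_swap_of_not_sameCycle {x y : α} (hab : ¬π.SameCycle a b)
    (hxy : π.SameCycle x y) : (π * swap a b).SameCycle x y := by
  have hab' := sameCycle_mul_swap_of_not_sameCycle hab
  refine hxy.rel_of_forall_apply (SameCycle.equivalence _) fun z => ?_
  rcases eq_or_ne z a with rfl | hza
  · simpa using hab'.trans (SameCycle.refl (π * swap z b) b).apply_right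
  rcases eq_or_ne z b with rfl | hzb
  · simpa using hab'.symm.trans (SameCycle.refl (π * swap a z) a).apply_right
  · simpa [swap_apply_of_ne_of_ne hza hzb] using (SameCycle.refl (π * swap a b) z).apply_right

end Equiv.Perm

namespace SimpleGraph

variable {V : Type*} {G : SimpleGraph V}

theorem Reachable.rel_of_forall_adj {r : V → V → Prop} (hr : Equivalence r)
    (h : ∀ x y, G.Adj x y → r x y) {x y : V} (hxy : G.Reachable x y) : r x y := by
  obtain ⟨p⟩ := hxy
  induction p with
  | nil => exact hr.refl _
  | cons hadj _ ih => exact hr.trans (h _ _ hadj) ih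

theorem Reachable.swap_apply [DecidableEq V] {a b : V} (hab : G.Reachable a b) (x : V) :
    G.Reachable x (swap a b x) := by
  rw [swap_apply_def]
  split_ifs with hxa hxb
  · exact hxa ▸ hab
  · exact hxb ▸ hab.symm
  · rfl

end SimpleGraph

theorem List.ncard_setOf_mem_le {α : Type*} (l : List α) : {x | x ∈ l}.ncard ≤ l.length := by
  classical
  rw [← List.coe_toFinset, Set.ncard_coe_finset]
  exact l.toFinset_card_le

theorem List.nodup_of_length_le_ncard {α : Type*} {l : List α}
    (h : l.length ≤ {x | x ∈ l}.ncard) : l.Nodup := by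
  classical
  rw [← List.coe_toFinset, Set.ncard_coe_finset] at h
  exact Multiset.toFinset_card_eq_card_iff_nodup (m := (l : Multiset α)) |>.1
    (le_antisymm l.toFinset_card_le h)

section TranspositionGraph

variable {α : Type*} [DecidableEq α]

def transpositionGraph (l : List (Perm α)) : SimpleGraph α :=
  fromRel fun a b => swap a b ∈ l

theorem transpositionGraph_adj {l : List (Perm α)} {x y : α} :
    (transpositionGraph l).Adj x y ↔ x ≠ y ∧ swap x y ∈ l := by
  simp [transpositionGraph, swap_comm y x]

theorem transpositionGraph_nil : transpositionGraph ([] : List (Perm α)) = ⊥ := by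
  ext
  simp [transpositionGraph_adj]

theorem transpositionGraph_append_swap (l : List (Perm α)) (a b : α) :
    transpositionGraph (l ++ [swap a b]) = transpositionGraph l ⊔ edge a b := by
  ext x y
  simp only [sup_adj, transpositionGraph_adj, edge_adj, List.mem_append, List.mem_singleton]
  rcases eq_or_ne x y with rfl | hxy
  · simp
  · rw [swap_eq_swap_iff hxy, Sym2.eq_iff]
    tauto

theorem card_edgeSet_transpositionGraph_le (l : List (Perm α)) :
    Nat.card (transpositionGraph l).edgeSet ≤ {g | g ∈ l}.ncard := by
  rw [Nat.card_coe_set_eq]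
  refine Set.ncard_le_ncard_of_injOn (Sym2.lift ⟨fun a b => swap a b, swap_comm⟩) ?_ ?_
    (List.finite_toSet l)
  · intro e he
    induction e using Sym2.ind
    exact (transpositionGraph_adj.1 he).2
  · intro e he e' _
    induction e using Sym2.ind
    induction e' using Sym2.ind
    exact (swap_eq_swap_iff (transpositionGraph_adj.1 he).1).1

variable {l : List (Perm α)}

theorem transpositionGraph_reachable_prod_apply (hl : ∀ g ∈ l, g.IsSwap) (x : α) :
    (transpositionGraph l).Reachable x (l.prod x) := by
  induction l using List.reverseRecOn generalizing x with
  | nil => rfl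
  | append_singleton t g ih =>
    obtain ⟨a, b, hab, rfl⟩ := hl g (by simp)
    rw [transpositionGraph_append_swap, List.prod_append, List.prod_singleton, Perm.mul_apply]
    have hedge : (edge a b).Reachable a b := ((edge_adj a b a b).2 ⟨.inl ⟨rfl, rfl⟩, hab⟩).reachable
    exact ((hedge.swap_apply x).mono le_sup_right).trans
      ((ih (fun g hg => hl g (by simp [hg])) _).mono le_sup_left)

theorem transpositionGraph_reachable_of_sameCycle (hl : ∀ g ∈ l, g.IsSwap) {x y : α}
    (h : l.prod.SameCycle x y) : (transpositionGraph l).Reachable x y :=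
  h.rel_of_forall_apply (reachable_is_equivalence _) (transpositionGraph_reachable_prod_apply hl)

theorem sameCycle_prod_of_transpositionGraph_reachable [Finite α] (hl : ∀ g ∈ l, g.IsSwap)
    (hnd : l.Nodup) (hac : (transpositionGraph l).IsAcyclic) {x y : α}
    (h : (transpositionGraph l).Reachable x y) : l.prod.SameCycle x y := by
  induction l using List.reverseRecOn generalizing x y with
  | nil =>
    rw [transpositionGraph_nil, reachable_bot] at h
    exact h ▸ .refl _ _
  | append_singleton t g ih =>
    obtain ⟨a, b, hab, rfl⟩ := hl g (by simp)
    rw [transpositionGraph_append_swap] at hac h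
    have hl' : ∀ g ∈ t, g.IsSwap := fun g hg => hl g (by simp [hg])
    have hnd' := List.nodup_append.1 hnd
    have hnot : ¬(transpositionGraph t).Reachable a b := fun hreach =>
      ((isAcyclic_sup_fromEdgeSet_iff.1 hac).2 hreach).elim hab fun hadj =>
        hnd'.2.2 _ (transpositionGraph_adj.1 hadj).2 _ (List.mem_singleton_self _) rfl
    have hsplit : ¬t.prod.SameCycle a b := mt (transpositionGraph_reachable_of_sameCycle hl') hnot
    rw [List.prod_append, List.prod_singleton]
    refine h.rel_of_forall_adj (Perm.SameCycle.equivalence _) fun u v huv => ?_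
    rcases huv with huv | huv
    · exact (ih hl' hnd'.1 (hac.anti le_sup_left) huv.reachable).mul_swap_of_not_sameCycle hsplit
    obtain ⟨⟨rfl, rfl⟩ | ⟨rfl, rfl⟩, -⟩ := (edge_adj _ _ _ _).1 huv
    · exact Perm.sameCycle_mul_swap_of_not_sameCycle hsplit
    · exact (Perm.sameCycle_mul_swap_of_not_sameCycle hsplit).symm

end TranspositionGraph

/-- The product of `n-1` transpositions in `S_n` is an `n`-cycle iff the associated
graph on `{1,…,n}` (an edge `{a,b}` for each transposition `(a b)`) is a tree. -/
theorem product_of_transpositions_isCycle_iff_tree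
    (n : ℕ) (hn : 2 ≤ n) (τ : Fin (n - 1) → Equiv.Perm (Fin n))
    (hτ : ∀ i, (τ i).IsSwap) :
    ((List.ofFn τ).prod.IsCycle ∧ (List.ofFn τ).prod.support.card = n) ↔
      (SimpleGraph.fromRel
        (fun a b : Fin n => ∃ i, τ i = Equiv.swap a b)).IsTree := by
  have : Nontrivial (Fin n) := Fin.nontrivial_iff_two_le.2 hn
  set l := List.ofFn τ
  have hl : ∀ g ∈ l, g.IsSwap := List.forall_mem_ofFn_iff.2 hτ
  have hG : fromRel (fun a b : Fin n => ∃ i, τ i = swap a b) = transpositionGraph l := by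
    ext
    simp [l, transpositionGraph, List.mem_ofFn']
  have hlen : l.length + 1 = Nat.card (Fin n) := by
    rw [List.length_ofFn, Nat.card_eq_fintype_card, Fintype.card_fin]; omega
  have hedges := card_edgeSet_transpositionGraph_le l
  have hsupp : l.prod.support.card = n ↔ l.prod.support = Finset.univ := by
    rw [← Finset.card_eq_iff_eq_univ, Fintype.card_fin]
  rw [hG, hsupp, Perm.isCycle_and_support_eq_univ_iff]
  refine ⟨fun h => ?_, fun hT x y => ?_⟩
  · have hconn : (transpositionGraph l).Connected :=
      ⟨fun x y => transpositionGraph_reachable_of_sameCycle hl (h x y)⟩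
    have := l.ncard_setOf_mem_le
    exact isTree_iff_connected_and_card.2
      ⟨hconn, le_antisymm (by omega) hconn.card_vert_le_card_edgeSet_add_one⟩
  · obtain ⟨hconn, hcard⟩ := isTree_iff_connected_and_card.1 hT
    exact sameCycle_prod_of_transpositionGraph_reachable hl
      (List.nodup_of_length_le_ncard (by omega)) hT.isAcyclic (hconn x y)
end

section
/- In S_4, the identity cannot be written as a product of four transpositions τ_1 τ_2 τ_3 τ_4 = e such that {τ_1, τ_2, τ_3, τ_4} generates a transitive subgroup of S_4. -/
def S4swaps : Fin 6 → Equiv.Perm (Fin 4) :=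
  ![Equiv.swap 0 1, Equiv.swap 0 2, Equiv.swap 0 3,
    Equiv.swap 1 2, Equiv.swap 1 3, Equiv.swap 2 3]

lemma mem_S4swaps : ∀ x y : Fin 4, x ≠ y → ∃ j, Equiv.swap x y = S4swaps j := by
  decide

set_option maxHeartbeats 4000000 in
set_option maxRecDepth 10000 in
lemma key : ∀ j0 j1 j2 j3 : Fin 6,
    S4swaps j0 * S4swaps j1 * S4swaps j2 * S4swaps j3 = 1 →
    ∃ A : Finset (Fin 4), A.Nonempty ∧ Aᶜ.Nonempty ∧
      ∀ x, (S4swaps j0 x ∈ A ↔ x ∈ A) ∧ (S4swaps j1 x ∈ A ↔ x ∈ A) ∧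
           (S4swaps j2 x ∈ A ↔ x ∈ A) ∧ (S4swaps j3 x ∈ A ↔ x ∈ A) := by
  decide

/-- In `S₄`, the identity is not a product of four transpositions generating a
transitive subgroup. -/
theorem no_transitive_four_transposition_factorization_of_identity :
    ¬ ∃ τ : Fin 4 → Equiv.Perm (Fin 4),
      (∀ i, (τ i).IsSwap) ∧ τ 0 * τ 1 * τ 2 * τ 3 = 1 ∧
      (∀ x y : Fin 4, ∃ g ∈ Subgroup.closure (Set.range τ), g x = y) := by
  rintro ⟨τ, hswap, hprod, htrans⟩
  -- each τ i is one of the six standard swaps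
  have hτ : ∀ i, ∃ j, τ i = S4swaps j := by
    intro i
    obtain ⟨x, y, hxy, hx⟩ := hswap i
    obtain ⟨j, hj⟩ := mem_S4swaps x y hxy
    exact ⟨j, hx.trans hj⟩
  obtain ⟨j0, h0⟩ := hτ 0
  obtain ⟨j1, h1⟩ := hτ 1
  obtain ⟨j2, h2⟩ := hτ 2
  obtain ⟨j3, h3⟩ := hτ 3
  rw [h0, h1, h2, h3] at hprod
  obtain ⟨A, hAne, hAcne, hA⟩ := key j0 j1 j2 j3 hprod
  -- every τ i preserves A
  have hgen : ∀ i, ∀ x : Fin 4, τ i x ∈ A ↔ x ∈ A := by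
    intro i
    fin_cases i
    · intro x; show (τ 0) x ∈ A ↔ x ∈ A; rw [h0]; exact (hA x).1
    · intro x; show (τ 1) x ∈ A ↔ x ∈ A; rw [h1]; exact (hA x).2.1
    · intro x; show (τ 2) x ∈ A ↔ x ∈ A; rw [h2]; exact (hA x).2.2.1
    · intro x; show (τ 3) x ∈ A ↔ x ∈ A; rw [h3]; exact (hA x).2.2.2
  -- hence every element of the closure preserves A
  have hclos : ∀ g ∈ Subgroup.closure (Set.range τ), ∀ x : Fin 4, g x ∈ A ↔ x ∈ A := by
    intro g hg
    induction hg using Subgroup.closure_induction with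
    | mem s hs =>
        obtain ⟨i, rfl⟩ := hs
        exact hgen i
    | one => intro x; rfl
    | mul g h _ _ hgA hhA =>
        intro x
        simpa [Equiv.Perm.mul_apply] using (hgA (h x)).trans (hhA x)
    | inv g _ hgA =>
        intro x
        have := hgA (g⁻¹ x)
        simpa using this.symm
  obtain ⟨u, hu⟩ := hAne
  obtain ⟨v, hv⟩ := hAcne
  obtain ⟨g, hg, hguv⟩ := htrans u v
  have : g u ∈ A := (hclos g hg u).mpr hu
  rw [hguv] at this
  exact (Finset.mem_compl.mp hv) this
end

section
/- Let s, t be roots of unity in ℚ(ζ_24) with s + t ∈ ℚ(ζ_12) and s·t ∈ ℚ(ζ_12), where s is a primitive 24-th root of unity. Then t = -s. -/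
open Polynomial

/-- If `s` is a primitive 24-th root of unity and `t` a 24-th root of unity such that
`s + t` and `s·t` lie in `ℚ(ζ₁₂) = ℚ(s²)`, then `t = -s`. -/
theorem root_pair_with_symmetric_functions_in_Q12 (s t : ℂ)
    (hs : IsPrimitiveRoot s 24) (ht : t ^ 24 = 1)
    (hsum : s + t ∈ IntermediateField.adjoin ℚ ({s ^ 2} : Set ℂ))
    (hprod : s * t ∈ IntermediateField.adjoin ℚ ({s ^ 2} : Set ℂ)) :
    t = -s := by
  set K := IntermediateField.adjoin ℚ ({s ^ 2} : Set ℂ) with hKdef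
  have h12 : IsPrimitiveRoot (s ^ 2) 12 := hs.pow (by norm_num) (by norm_num)
  have hint : IsIntegral ℚ s :=
    ⟨X ^ 24 - 1, monic_X_pow_sub_C 1 (by norm_num), by simp [hs.pow_eq_one]⟩
  have hint2 : IsIntegral ℚ (s ^ 2) := hint.pow 2
  have hs2K : (s ^ 2) ∈ K := IntermediateField.mem_adjoin_simple_self ℚ (s ^ 2)
  have hsK : s ∉ K := by
    intro hsmem
    have hle : IntermediateField.adjoin ℚ ({s} : Set ℂ) ≤ K :=
      IntermediateField.adjoin_le_iff.2 (by simpa using hsmem)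
    have hle' : K ≤ IntermediateField.adjoin ℚ ({s} : Set ℂ) :=
      IntermediateField.adjoin_le_iff.2 (by
        simpa using pow_mem (IntermediateField.mem_adjoin_simple_self ℚ s) 2)
    have hEq : K = IntermediateField.adjoin ℚ ({s} : Set ℂ) := le_antisymm hle' hle
    have h4 : Module.finrank ℚ K = 4 := by
      rw [hKdef, IntermediateField.adjoin.finrank hint2,
        ← cyclotomic_eq_minpoly_rat h12 (by norm_num), natDegree_cyclotomic]
      decide
    have h8 : Module.finrank ℚ K = 8 := by
      rw [hEq, IntermediateField.adjoin.finrank hint,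
        ← cyclotomic_eq_minpoly_rat hs (by norm_num), natDegree_cyclotomic]
      decide
    omega
  obtain ⟨i, hi24, hit⟩ := hs.eq_pow_of_pow_eq_one ht
  rcases Nat.even_or_odd i with ⟨m, rfl⟩ | ⟨m, rfl⟩
  · exfalso
    apply hsK
    have htK : t ∈ K := by
      rw [← hit]
      have h1 : s ^ (m + m) = (s ^ 2) ^ m := by ring
      rw [h1]
      exact pow_mem hs2K m
    simpa using K.sub_mem hsum htK
  · have humem : (1 + (s ^ 2) ^ m : ℂ) ∈ K := K.add_mem K.one_mem (pow_mem hs2K m)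
    by_cases h0 : (1 + (s ^ 2) ^ m : ℂ) = 0
    · rw [← hit]
      have hm : (s ^ 2) ^ m = -1 := by linear_combination h0
      calc s ^ (2 * m + 1) = (s ^ 2) ^ m * s := by ring
        _ = -s := by rw [hm]; ring
    · exfalso
      apply hsK
      have hform : s + t = s * (1 + (s ^ 2) ^ m) := by rw [← hit]; ring
      rw [hform] at hsum
      have h2 : s * (1 + (s ^ 2) ^ m) * (1 + (s ^ 2) ^ m)⁻¹ ∈ K :=
        K.mul_mem hsum (K.inv_mem humem)
      rwa [mul_assoc, mul_inv_cancel₀ h0, mul_one] at h2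
end
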